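/- arXiv:2602.22501 — 2 statements merged into one kernel-verified Lean document; each statement's English description precedes it below -/
import Mathlib

section
/- Let z₀ ∈ ℝ, h > 0, ρ₁ > 0. Let U ⊆ ℝ² be an open set invariant under the reflection (ρ,z) ↦ (ρ, 2z₀ − z) containing the segments [0,ρ₁]×{z₀−h}, [0,ρ₁]×{z₀+h} and {ρ₁}×[z₀−h, z₀+h]. Let σ, ω be continuously differentiable on U ∩ {ρ > 0}, with σ(ρ, 2z₀ − z) = σ(ρ, z) and ω(ρ, 2z₀ − z) = c − ω(ρ, z) for some constant c. Set η = ρ²e^σ, P = (ρ/4)(σ_ρ² − σ_z²) + (ρ/(4η²))(ω_ρ² − ω_z²) and Q = (ρ/2)(σ_ρσ_z + η^{−2}ω_ρω_z), and assume P and Q extend continuously to U. Let q : U → ℝ be continuous on U, continuously differentiable on U ∩ {ρ > 0}, with ∂_ρ q = P and ∂_z q = Q there. Then q(0, z₀ + h) = q(0, z₀ − h). -/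
/-! The reflection `z ↦ 2 z₀ - z` fixes the radial and flips the axial partial derivatives, so with
`σ` even and `ω` odd up to a constant, `P` is even and `Q` is odd about `z₀` (note `η` is even).
Integrating `dq = P dρ + Q dz` from `(0, z₀ - h)` to `(ρ₁, z₀ - h)`, up to `(ρ₁, z₀ + h)` and back
to `(0, z₀ + h)`, the two horizontal legs cancel and the vertical leg vanishes. -/

/-- Partial derivative with respect to the first (ρ) variable. -/
noncomputable def pdr (f : ℝ × ℝ → ℝ) (p : ℝ × ℝ) : ℝ :=
  deriv (fun x => f (x, p.2)) p.1

/-- Partial derivative with respect to the second (z) variable. -/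
noncomputable def pdz (f : ℝ × ℝ → ℝ) (p : ℝ × ℝ) : ℝ :=
  deriv (fun y => f (p.1, y)) p.2

open Set Filter Topology

def reflectZ (z₀ : ℝ) (p : ℝ × ℝ) : ℝ × ℝ := (p.1, 2 * z₀ - p.2)

-- The right-hand sides `P` and `Q` of the quadratures `∂_ρ q = P`, `∂_z q = Q`.
noncomputable def weylP (σ ω η : ℝ × ℝ → ℝ) (p : ℝ × ℝ) : ℝ :=
  p.1 / 4 * ((pdr σ p) ^ 2 - (pdz σ p) ^ 2)
    + p.1 / (4 * (η p) ^ 2) * ((pdr ω p) ^ 2 - (pdz ω p) ^ 2)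

noncomputable def weylQ (σ ω η : ℝ × ℝ → ℝ) (p : ℝ × ℝ) : ℝ :=
  p.1 / 2 * (pdr σ p * pdz σ p + pdr ω p * pdz ω p / (η p) ^ 2)

section PartialDerivatives

variable {f g : ℝ × ℝ → ℝ} {p : ℝ × ℝ}

lemma hasDerivAt_pdr (hf : DifferentiableAt ℝ f p) :
    HasDerivAt (fun x => f (x, p.2)) (pdr f p) p.1 :=
  (hf.comp p.1 (by fun_prop : DifferentiableAt ℝ (fun x : ℝ => (x, p.2)) p.1)).hasDerivAt

lemma hasDerivAt_pdz (hf : DifferentiableAt ℝ f p) :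
    HasDerivAt (fun y => f (p.1, y)) (pdz f p) p.2 :=
  (hf.comp p.2 (by fun_prop : DifferentiableAt ℝ (fun y : ℝ => (p.1, y)) p.2)).hasDerivAt

lemma pdr_congr (h : f =ᶠ[𝓝 p] g) : pdr f p = pdr g p :=
  (h.comp_tendsto (by fun_prop : Continuous fun x : ℝ => (x, p.2)).continuousAt).deriv_eq

lemma pdz_congr (h : f =ᶠ[𝓝 p] g) : pdz f p = pdz g p :=
  (h.comp_tendsto (by fun_prop : Continuous fun y : ℝ => (p.1, y)).continuousAt).deriv_eq

lemma pdr_const_sub (c : ℝ) : pdr (fun x => c - f x) p = -pdr f p :=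
  deriv_const_sub c

lemma pdz_const_sub (c : ℝ) : pdz (fun x => c - f x) p = -pdz f p :=
  deriv_const_sub c

lemma pdr_comp_reflectZ (z₀ : ℝ) : pdr (f ∘ reflectZ z₀) p = pdr f (reflectZ z₀ p) :=
  rfl

lemma pdz_comp_reflectZ (z₀ : ℝ) : pdz (f ∘ reflectZ z₀) p = -pdz f (reflectZ z₀ p) :=
  deriv_comp_const_sub (fun y => f (p.1, y)) (2 * z₀) p.2

lemma pdr_reflectZ_of_eventuallyEq {z₀ : ℝ} (h : f ∘ reflectZ z₀ =ᶠ[𝓝 p] g) :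
    pdr f (reflectZ z₀ p) = pdr g p := by
  rw [← pdr_comp_reflectZ, pdr_congr h]

lemma pdz_reflectZ_of_eventuallyEq {z₀ : ℝ} (h : f ∘ reflectZ z₀ =ᶠ[𝓝 p] g) :
    pdz f (reflectZ z₀ p) = -pdz g p := by
  rw [← pdz_congr h, pdz_comp_reflectZ, neg_neg]

end PartialDerivatives

section Reflection

variable {σ ω η : ℝ × ℝ → ℝ} {z₀ c : ℝ} {p : ℝ × ℝ}

lemma weylP_reflectZ (hσ : σ ∘ reflectZ z₀ =ᶠ[𝓝 p] σ)
    (hω : ω ∘ reflectZ z₀ =ᶠ[𝓝 p] fun x => c - ω x) (hη : η (reflectZ z₀ p) = η p) :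
    weylP σ ω η (reflectZ z₀ p) = weylP σ ω η p := by
  rw [weylP, weylP, pdr_reflectZ_of_eventuallyEq hσ, pdz_reflectZ_of_eventuallyEq hσ,
    pdr_reflectZ_of_eventuallyEq hω, pdz_reflectZ_of_eventuallyEq hω, pdr_const_sub,
    pdz_const_sub, hη, reflectZ]
  ring

lemma weylQ_reflectZ (hσ : σ ∘ reflectZ z₀ =ᶠ[𝓝 p] σ)
    (hω : ω ∘ reflectZ z₀ =ᶠ[𝓝 p] fun x => c - ω x) (hη : η (reflectZ z₀ p) = η p) :
    weylQ σ ω η (reflectZ z₀ p) = -weylQ σ ω η p := by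
  rw [weylQ, weylQ, pdr_reflectZ_of_eventuallyEq hσ, pdz_reflectZ_of_eventuallyEq hσ,
    pdr_reflectZ_of_eventuallyEq hω, pdz_reflectZ_of_eventuallyEq hω, pdr_const_sub,
    pdz_const_sub, hη, reflectZ]
  ring

end Reflection

lemma intervalIntegral.integral_eq_zero_of_odd_about_midpoint {E : Type*} [NormedAddCommGroup E]
    [NormedSpace ℝ E] {g : ℝ → E} {a b : ℝ} (hg : ∀ y ∈ uIcc a b, g (a + b - y) = -g y) :
    ∫ y in a..b, g y = 0 := by
  have hflip : ∫ y in a..b, g (a + b - y) = ∫ y in a..b, g y := by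
    rw [intervalIntegral.integral_comp_sub_left, add_sub_cancel_right, add_sub_cancel_left]
  rw [intervalIntegral.integral_congr hg, intervalIntegral.integral_neg, neg_eq_iff_add_eq_zero,
    ← two_smul ℝ] at hflip
  exact (smul_eq_zero.mp hflip).resolve_left two_ne_zero

section Quadratures

variable {U S : Set (ℝ × ℝ)} {q P Q : ℝ × ℝ → ℝ}

lemma integral_horizontal_eq_sub (hq : ContinuousOn q U) (hqS : ∀ p ∈ S, DifferentiableAt ℝ q p)
    (hqr : ∀ p ∈ S, pdr q p = P p) (hP : ContinuousOn P U) {a b z : ℝ} (hab : a ≤ b)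
    (hseg : ∀ x ∈ Icc a b, (x, z) ∈ U) (hinner : ∀ x ∈ Ioo a b, (x, z) ∈ S) :
    ∫ x in a..b, P (x, z) = q (b, z) - q (a, z) := by
  have hslice : MapsTo (fun x : ℝ => (x, z)) (Icc a b) U := hseg
  refine intervalIntegral.integral_eq_sub_of_hasDerivAt_of_le hab
    (hq.comp (by fun_prop) hslice) (fun x hx => ?_) ?_
  · exact hqr _ (hinner x hx) ▸ hasDerivAt_pdr (hqS _ (hinner x hx))
  · exact (hP.comp (by fun_prop) (uIcc_of_le hab ▸ hslice)).intervalIntegrable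

lemma integral_vertical_eq_sub (hqS : ∀ p ∈ S, DifferentiableAt ℝ q p)
    (hqz : ∀ p ∈ S, pdz q p = Q p) (hQ : ContinuousOn Q S) {a b ρ : ℝ}
    (hseg : ∀ y ∈ uIcc a b, (ρ, y) ∈ S) :
    ∫ y in a..b, Q (ρ, y) = q (ρ, b) - q (ρ, a) :=
  intervalIntegral.integral_eq_sub_of_hasDerivAt (f := fun y => q (ρ, y))
    (fun y hy => hqz _ (hseg y hy) ▸ hasDerivAt_pdz (hqS _ (hseg y hy)))
    (hQ.comp (by fun_prop) hseg).intervalIntegrable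

end Quadratures

theorem q_equal_on_axis_sigma_even_omega_odd_general
    (z₀ h ρ₁ : ℝ) (hh : 0 < h) (hρ₁ : 0 < ρ₁)
    (U : Set (ℝ × ℝ)) (hU : IsOpen U)
    (hUsym : ∀ p ∈ U, (p.1, 2 * z₀ - p.2) ∈ U)
    (hsegm : ∀ x ∈ Set.Icc (0 : ℝ) ρ₁, (x, z₀ - h) ∈ U)
    (hsegp : ∀ x ∈ Set.Icc (0 : ℝ) ρ₁, (x, z₀ + h) ∈ U)
    (hsegv : ∀ y ∈ Set.Icc (z₀ - h) (z₀ + h), (ρ₁, y) ∈ U)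
    (σ ω : ℝ × ℝ → ℝ)
    (c : ℝ)
    (hσsym : ∀ p ∈ U, 0 < p.1 → σ (p.1, 2 * z₀ - p.2) = σ p)
    (hωsym : ∀ p ∈ U, 0 < p.1 → ω (p.1, 2 * z₀ - p.2) = c - ω p)
    (η P Q : ℝ × ℝ → ℝ)
    (hη : ∀ p, η p = p.1 ^ 2 * Real.exp (σ p))
    (hP : ∀ p ∈ U ∩ {p : ℝ × ℝ | 0 < p.1},
      P p = p.1 / 4 * ((pdr σ p) ^ 2 - (pdz σ p) ^ 2)
        + p.1 / (4 * (η p) ^ 2) * ((pdr ω p) ^ 2 - (pdz ω p) ^ 2))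
    (hQ : ∀ p ∈ U ∩ {p : ℝ × ℝ | 0 < p.1},
      Q p = p.1 / 2 * (pdr σ p * pdz σ p + pdr ω p * pdz ω p / (η p) ^ 2))
    (hPcont : ContinuousOn P U) (hQcont : ContinuousOn Q U)
    (q : ℝ × ℝ → ℝ)
    (hqcont : ContinuousOn q U)
    (hqC1 : ContDiffOn ℝ 1 q (U ∩ {p : ℝ × ℝ | 0 < p.1}))
    (hqr : ∀ p ∈ U ∩ {p : ℝ × ℝ | 0 < p.1}, pdr q p = P p)
    (hqz : ∀ p ∈ U ∩ {p : ℝ × ℝ | 0 < p.1}, pdz q p = Q p) :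
    q (0, z₀ + h) = q (0, z₀ - h) := by
  set S := U ∩ {p : ℝ × ℝ | 0 < p.1}
  have hS : IsOpen S := hU.inter (isOpen_lt continuous_const continuous_fst)
  have hreflS : ∀ p ∈ S, reflectZ z₀ p ∈ S := fun p hp => ⟨hUsym p hp.1, hp.2⟩
  have hσev : ∀ p ∈ S, σ ∘ reflectZ z₀ =ᶠ[𝓝 p] σ := fun p hp =>
    eventuallyEq_of_mem (hS.mem_nhds hp) fun x hx => hσsym x hx.1 hx.2
  have hωev : ∀ p ∈ S, ω ∘ reflectZ z₀ =ᶠ[𝓝 p] fun x => c - ω x := fun p hp =>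
    eventuallyEq_of_mem (hS.mem_nhds hp) fun x hx => hωsym x hx.1 hx.2
  have hηsym : ∀ p ∈ S, η (reflectZ z₀ p) = η p := fun p hp => by
    rw [hη, hη, reflectZ, hσsym p hp.1 hp.2]
  have hPsym : ∀ p ∈ S, P (reflectZ z₀ p) = P p := fun p hp => by
    rw [hP _ (hreflS p hp), hP p hp]
    exact weylP_reflectZ (hσev p hp) (hωev p hp) (hηsym p hp)
  have hQsym : ∀ p ∈ S, Q (reflectZ z₀ p) = -Q p := fun p hp => by
    rw [hQ _ (hreflS p hp), hQ p hp]
    exact weylQ_reflectZ (hσev p hp) (hωev p hp) (hηsym p hp)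
  have hqdiff : ∀ p ∈ S, DifferentiableAt ℝ q p := fun p hp =>
    (hqC1.differentiableOn one_ne_zero).differentiableAt (hS.mem_nhds hp)
  have hbottom := integral_horizontal_eq_sub hqcont hqdiff hqr hPcont hρ₁.le hsegm
    fun x hx => ⟨hsegm x (Ioo_subset_Icc_self hx), hx.1⟩
  have htop := integral_horizontal_eq_sub hqcont hqdiff hqr hPcont hρ₁.le hsegp
    fun x hx => ⟨hsegp x (Ioo_subset_Icc_self hx), hx.1⟩
  have hlegs : ∫ x in 0..ρ₁, P (x, z₀ + h) = ∫ x in 0..ρ₁, P (x, z₀ - h) := by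
    refine intervalIntegral.integral_congr_ae (.of_forall fun x hx => ?_)
    rw [uIoc_of_le hρ₁.le] at hx
    have := hPsym (x, z₀ - h) ⟨hsegm x ⟨hx.1.le, hx.2⟩, hx.1⟩
    rwa [reflectZ, show 2 * z₀ - (z₀ - h) = z₀ + h by ring] at this
  have hvert_mem : ∀ y ∈ uIcc (z₀ - h) (z₀ + h), (ρ₁, y) ∈ S := fun y hy =>
    ⟨hsegv y (by rwa [uIcc_of_le (by linarith)] at hy), hρ₁⟩
  have hvert := integral_vertical_eq_sub hqdiff hqz (hQcont.mono inter_subset_left) hvert_mem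
  have hvert_zero : ∫ y in (z₀ - h)..(z₀ + h), Q (ρ₁, y) = 0 :=
    intervalIntegral.integral_eq_zero_of_odd_about_midpoint fun y hy => by
      rw [show z₀ - h + (z₀ + h) - y = 2 * z₀ - y by ring]
      exact hQsym _ (hvert_mem y hy)
  linarith

/-- for data symmetric about z₀ with σ even and ω odd up to an additive
constant, the values of the metric function q on the two axis points (0, z₀ ± h)
coincide. -/
theorem q_equal_on_axis_sigma_even_omega_odd
    (z₀ h ρ₁ : ℝ) (hh : 0 < h) (hρ₁ : 0 < ρ₁)
    (U : Set (ℝ × ℝ)) (hU : IsOpen U)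
    (hUsym : ∀ p ∈ U, (p.1, 2 * z₀ - p.2) ∈ U)
    (hsegm : ∀ x ∈ Set.Icc (0 : ℝ) ρ₁, (x, z₀ - h) ∈ U)
    (hsegp : ∀ x ∈ Set.Icc (0 : ℝ) ρ₁, (x, z₀ + h) ∈ U)
    (hsegv : ∀ y ∈ Set.Icc (z₀ - h) (z₀ + h), (ρ₁, y) ∈ U)
    (σ ω : ℝ × ℝ → ℝ)
    (hσ : ContDiffOn ℝ 1 σ (U ∩ {p : ℝ × ℝ | 0 < p.1}))
    (hω : ContDiffOn ℝ 1 ω (U ∩ {p : ℝ × ℝ | 0 < p.1}))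
    (c : ℝ)
    (hσsym : ∀ p ∈ U, 0 < p.1 → σ (p.1, 2 * z₀ - p.2) = σ p)
    (hωsym : ∀ p ∈ U, 0 < p.1 → ω (p.1, 2 * z₀ - p.2) = c - ω p)
    (η P Q : ℝ × ℝ → ℝ)
    (hη : ∀ p, η p = p.1 ^ 2 * Real.exp (σ p))
    (hP : ∀ p ∈ U ∩ {p : ℝ × ℝ | 0 < p.1},
      P p = p.1 / 4 * ((pdr σ p) ^ 2 - (pdz σ p) ^ 2)
        + p.1 / (4 * (η p) ^ 2) * ((pdr ω p) ^ 2 - (pdz ω p) ^ 2))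
    (hQ : ∀ p ∈ U ∩ {p : ℝ × ℝ | 0 < p.1},
      Q p = p.1 / 2 * (pdr σ p * pdz σ p + pdr ω p * pdz ω p / (η p) ^ 2))
    (hPcont : ContinuousOn P U) (hQcont : ContinuousOn Q U)
    (q : ℝ × ℝ → ℝ)
    (hqcont : ContinuousOn q U)
    (hqC1 : ContDiffOn ℝ 1 q (U ∩ {p : ℝ × ℝ | 0 < p.1}))
    (hqr : ∀ p ∈ U ∩ {p : ℝ × ℝ | 0 < p.1}, pdr q p = P p)
    (hqz : ∀ p ∈ U ∩ {p : ℝ × ℝ | 0 < p.1}, pdz q p = Q p) :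
    q (0, z₀ + h) = q (0, z₀ - h) :=
  q_equal_on_axis_sigma_even_omega_odd_general z₀ h ρ₁ hh hρ₁ U hU hUsym hsegm hsegp hsegv σ ω c
    hσsym hωsym η P Q hη hP hQ hPcont hQcont q hqcont hqC1 hqr hqz
end

section
/- Let w ≠ 0, a > 0, b ∈ ℝ and ε ∈ {1, −1}. On the open set U = {(ρ,z) ∈ ℝ² : ρ > 0 and sinh(ε a ln ρ + b) > 0}, define η(ρ) = ρ (|w|/a) sinh(ε a ln ρ + b), σ = ln(η/ρ²), and ω(ρ,z) = w z. Then (σ, ω) satisfies the reduced vacuum Einstein equations Δσ = −e^{−2σ}(ω_ρ² + ω_z²)/ρ⁴ and Δω = 4ω_ρ/ρ + 2(ω_ρσ_ρ + ω_zσ_z) on U. -/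
/-- The flat cylindrically symmetric Laplacian Δ = ∂²_ρ + (1/ρ)∂_ρ + ∂²_z. -/
noncomputable def lap (f : ℝ × ℝ → ℝ) (p : ℝ × ℝ) : ℝ :=
  pdr (pdr f) p + pdr f p / p.1 + pdz (pdz f) p

/-!
Since ω = w z is linear in z and σ depends on ρ alone, the twist equation reduces to `0 = 0` and
the σ-equation to an ODE in ρ. Away from the zeros of `sinh`, σ = log k + log (sinh u) − log ρ with
u = c log ρ + b; both `log ρ` and `u` are annihilated by the radial Laplacian ∂²_ρ + ρ⁻¹ ∂_ρ, which
leaves Δσ = −(c / (ρ sinh u))². With k = |w|/a this equals −e^{−2σ} w² / ρ⁴ exactly when c² = a².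
-/

open Real Filter Topology

section Separable

variable (g : ℝ → ℝ) (p : ℝ × ℝ)

lemma pdr_comp_fst : pdr (fun q => g q.1) p = deriv g p.1 := rfl

lemma pdz_comp_fst : pdz (fun q => g q.1) p = 0 := deriv_const p.2 (g p.1)

lemma pdr_comp_snd : pdr (fun q => g q.2) p = 0 := deriv_const p.1 (g p.2)

lemma pdz_comp_snd : pdz (fun q => g q.2) p = deriv g p.2 := rfl

lemma lap_comp_fst : lap (fun q => g q.1) p = deriv (deriv g) p.1 + deriv g p.1 / p.1 := by
  have h : pdz (fun q => g q.1) = fun _ => 0 := funext (pdz_comp_fst g)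
  rw [lap, h, pdz_comp_fst (fun _ => 0), add_zero]
  rfl

lemma lap_comp_snd : lap (fun q => g q.2) p = deriv (deriv g) p.2 := by
  have h : pdr (fun q => g q.2) = fun _ => 0 := funext (pdr_comp_snd g)
  rw [lap, h, pdr_comp_snd (fun _ => 0)]
  simp only [zero_div, zero_add]
  rfl

end Separable

/-- σ as a function of ρ, with `k = |w| / a` and `c = ±a`. -/
noncomputable def lewisSigma (k c b x : ℝ) : ℝ :=
  log (x * k * sinh (c * log x + b) / x ^ 2)

section Radial

variable {k c b x : ℝ}

lemma hasDerivAt_const_mul_log_add (c b : ℝ) (hx : x ≠ 0) :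
    HasDerivAt (fun y => c * log y + b) (c * x⁻¹) x :=
  ((hasDerivAt_log hx).const_mul c).add_const b

lemma hasDerivAt_lewisSigma (hk : k ≠ 0) (hx : 0 < x) (hs : sinh (c * log x + b) ≠ 0) :
    HasDerivAt (lewisSigma k c b)
      ((c * cosh (c * log x + b) / sinh (c * log x + b) - 1) / x) x := by
  have hu := hasDerivAt_const_mul_log_add c b hx.ne'
  have hη := (((hasDerivAt_id' x).mul_const k).fun_mul hu.sinh).fun_div (hasDerivAt_pow 2 x)
    (pow_ne_zero 2 hx.ne')
  refine (hη.log (by simp [hk, hs, hx.ne'])).congr_deriv ?_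
  field_simp
  ring

lemma deriv_lewisSigma_eventuallyEq (hk : k ≠ 0) (hx : 0 < x) (hs : sinh (c * log x + b) ≠ 0) :
    deriv (lewisSigma k c b) =ᶠ[𝓝 x]
      fun y => (c * cosh (c * log y + b) / sinh (c * log y + b) - 1) / y := by
  have hu := hasDerivAt_const_mul_log_add c b hx.ne'
  filter_upwards [Ioi_mem_nhds hx, hu.sinh.continuousAt.eventually_ne hs] with y hy hsy
  exact (hasDerivAt_lewisSigma hk hy hsy).deriv

lemma lewisSigma_radial_laplacian (hk : k ≠ 0) (hx : 0 < x) (hs : sinh (c * log x + b) ≠ 0) :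
    deriv (deriv (lewisSigma k c b)) x + deriv (lewisSigma k c b) x / x
      = -(c / (x * sinh (c * log x + b))) ^ 2 := by
  have hu := hasDerivAt_const_mul_log_add c b hx.ne'
  have hD := (((hu.cosh.const_mul c).fun_div hu.sinh hs).sub_const 1).fun_div
    (hasDerivAt_id' x) hx.ne'
  rw [(deriv_lewisSigma_eventuallyEq hk hx hs).deriv_eq, hD.deriv,
    (hasDerivAt_lewisSigma hk hx hs).deriv]
  field_simp
  linear_combination (-c ^ 2) * cosh_sq (c * log x + b)

end Radial

lemma exp_neg_two_mul_log {y : ℝ} (hy : y ≠ 0) : exp (-2 * log y) = (y ^ 2)⁻¹ := by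
  rw [show -2 * log y = log ((y ^ 2)⁻¹) by rw [log_inv, log_pow]; push_cast; ring,
    exp_log (by positivity)]

/-- the Lewis family (III±), with η = ρ(|w|/a)sinh(±a ln ρ + b) and
ω = wz, satisfies the reduced vacuum Einstein equations on the open set where
ρ > 0 and sinh(±a ln ρ + b) > 0. -/
theorem lewis_III_solves_reduced_einstein
    (w a b ε : ℝ) (hw : w ≠ 0) (ha : 0 < a) (hε : ε = 1 ∨ ε = -1)
    (η σ ω : ℝ × ℝ → ℝ)
    (hη : ∀ p : ℝ × ℝ, η p = p.1 * (|w| / a) * Real.sinh (ε * a * Real.log p.1 + b))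
    (hσ : ∀ p : ℝ × ℝ, σ p = Real.log (η p / p.1 ^ 2))
    (hω : ∀ p : ℝ × ℝ, ω p = w * p.2) :
    ∀ p : ℝ × ℝ, 0 < p.1 → 0 < Real.sinh (ε * a * Real.log p.1 + b) →
      lap σ p = - Real.exp (-2 * σ p) * ((pdr ω p) ^ 2 + (pdz ω p) ^ 2) / p.1 ^ 4
      ∧ lap ω p = 4 * pdr ω p / p.1
          + 2 * (pdr ω p * pdr σ p + pdz ω p * pdz σ p) := by
  intro p hρ hs
  have hk : |w| / a ≠ 0 := div_ne_zero (abs_ne_zero.2 hw) ha.ne'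
  obtain rfl : σ = fun q => lewisSigma (|w| / a) (ε * a) b q.1 :=
    funext fun q => by rw [hσ, hη, lewisSigma]
  obtain rfl : ω = fun q => w * q.2 := funext hω
  simp only [lap_comp_fst, lap_comp_snd, pdr_comp_snd, pdz_comp_snd, pdz_comp_fst,
    lewisSigma_radial_laplacian hk hρ hs.ne']
  refine ⟨?_, by simp⟩
  have hε2 : ε ^ 2 = 1 := by rcases hε with rfl | rfl <;> norm_num
  rw [lewisSigma, exp_neg_two_mul_log (by positivity)]
  simp only [deriv_const_mul_id']
  field_simp
  rw [sq_abs]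
  linear_combination (-w ^ 2) * hε2
end
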